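/- arXiv:2401.07771 — 7 statements merged into one kernel-verified Lean document; each statement's English description precedes it below -/
import Mathlib

section
/- Let σ be an irreducible Pisot substitution and let N be a positive integer such that every entry of M_σ^N is positive. Then every entry of A^{N+1} is positive; in particular the prefix–suffix transition matrix A is irreducible and aperiodic. -/
open scoped BigOperators

namespace PisotPaper

/-- Incidence matrix of a substitution: the `j`-th column is the abelianization of `σ j`. -/
def incMat {n : ℕ} (σ : Fin n → List (Fin n)) : Matrix (Fin n) (Fin n) ℤ :=
  fun i j => ((σ j).count i : ℤ)

/-- A Pisot number: a real algebraic integer `α > 1` whose other conjugates have modulus `< 1`. -/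
def IsPisot (α : ℝ) : Prop :=
  1 < α ∧ IsIntegral ℤ α ∧
    ∀ β : ℂ, Polynomial.aeval β (minpoly ℚ α) = 0 → β ≠ (α : ℂ) → ‖β‖ < 1

/-- An irreducible Pisot substitution with Perron–Frobenius root `α`: every `σ a` is a
nonempty word, the characteristic polynomial of the incidence matrix is irreducible over `ℚ`,
and `α` is a root of it which is a Pisot number. -/
def IsIrredPisot {n : ℕ} (σ : Fin n → List (Fin n)) (α : ℝ) : Prop :=
  (∀ a, σ a ≠ []) ∧
  Irreducible ((incMat σ).map (Int.cast : ℤ → ℚ)).charpoly ∧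
  ((incMat σ).map (Int.cast : ℤ → ℝ)).charpoly.IsRoot α ∧
  IsPisot α

/-- The prefix–suffix states `E = {(a : p) : p a proper prefix of σ a}`, encoded as the
position of the distinguished letter: `(b : p a s)` corresponds to `⟨b, |p|⟩`. -/
abbrev PS {n : ℕ} (σ : Fin n → List (Fin n)) : Type := Σ b : Fin n, Fin (σ b).length

/-- The distinguished letter `a` of `(b : p a s)`. -/
def psLetter {n : ℕ} (σ : Fin n → List (Fin n)) (e : PS σ) : Fin n := (σ e.1).get e.2

/-- The prefix–suffix transition matrix: for `J = (b : p a s)` and `I = (b' : p' a' s')`,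
`A I J = 1` iff `a = b'`. -/
def transMat {n : ℕ} (σ : Fin n → List (Fin n)) : Matrix (PS σ) (PS σ) ℤ :=
  fun I J => if psLetter σ J = I.1 then 1 else 0


lemma sumGet {n : ℕ} (l : List (Fin n)) (f : Fin n → ℤ) :
    (∑ p : Fin l.length, f (l.get p)) = ∑ a, f a * (l.count a : ℤ) := by
  induction l with
  | nil => simp
  | cons x l ih =>
      have h : (∑ p : Fin (x :: l).length, f ((x :: l).get p))
          = f x + ∑ p : Fin l.length, f (l.get p) :=
        Fin.sum_univ_succ (fun p : Fin (l.length + 1) => f ((x :: l).get p))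
      rw [h, ih]
      simp only [List.count_cons, beq_iff_eq]
      push_cast
      simp only [mul_add, Finset.sum_add_distrib, mul_ite, mul_one, mul_zero,
        Finset.sum_ite_eq, Finset.mem_univ, if_true]
      exact (add_comm _ _)

lemma key {n : ℕ} (σ : Fin n → List (Fin n)) (m : ℕ) (I J : PS σ) :
    (transMat σ ^ (m + 1)) I J = (incMat σ ^ m) I.1 (psLetter σ J) := by
  induction m generalizing J with
  | zero =>
      rw [pow_one, pow_zero]
      show (if psLetter σ J = I.1 then (1:ℤ) else 0) = _
      rw [Matrix.one_apply]
      by_cases h : psLetter σ J = I.1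
      · simp [h]
      · rw [if_neg h, if_neg (fun e => h e.symm)]
  | succ m ih =>
      rw [pow_succ, Matrix.mul_apply]
      simp only [ih, transMat]
      rw [← Finset.univ_sigma_univ, Finset.sum_sigma]
      have h1 : ∀ b : Fin n,
          (∑ p : Fin (σ b).length,
            (incMat σ ^ m) I.1 (psLetter σ ⟨b, p⟩) * (if psLetter σ J = b then 1 else 0))
          = if psLetter σ J = b then
              ∑ a, (incMat σ ^ m) I.1 a * ((σ b).count a : ℤ) else 0 := by
        intro b
        by_cases h : psLetter σ J = b
        · simp only [h, if_true, mul_one]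
          exact sumGet (σ b) _
        · simp [h]
      rw [Finset.sum_congr rfl (fun b _ => h1 b), Finset.sum_ite_eq,
        if_pos (Finset.mem_univ _), pow_succ, Matrix.mul_apply]
      rfl

/-- If `σ` is an irreducible Pisot substitution and `N > 0` is such that
every entry of `M_σ ^ N` is positive, then every entry of `A ^ (N+1)` is positive. -/
theorem statement0 {n : ℕ} (hn : 2 ≤ n) (σ : Fin n → List (Fin n)) (α : ℝ)
    (hσ : IsIrredPisot σ α) (N : ℕ) (hN : 0 < N)
    (hpos : ∀ i j : Fin n, 0 < (incMat σ ^ N) i j) :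
    ∀ I J : PS σ, 0 < (transMat σ ^ (N + 1)) I J := by
  intro I J
  rw [key σ N I J]
  exact hpos _ _

end PisotPaper
end

section
/- Let σ be a substitution over 𝒜 = {1,…,n} with incidence matrix M_σ and prefix–suffix transition matrix A, and let λ ∈ ℂ. (i) If u ∈ ℂⁿ satisfies M_σ u = λ u, then the vector [u] ∈ ℂ^E defined by [u]_{(b : p a s)} = u_b satisfies A [u] = λ [u]. (ii) If v ∈ ℂⁿ satisfies ᵗM_σ v = λ v, then the vector [v] ∈ ℂ^E defined by [v]_{(b : p a s)} = v_a satisfies ᵗA [v] = λ [v]. -/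
open scoped BigOperators

namespace PisotPaper

lemma sum_count_mul {n : ℕ} (l : List (Fin n)) (f : Fin n → ℂ) :
    ∑ i : Fin n, (l.count i : ℂ) * f i = (l.map f).sum := by
  induction l with
  | nil => simp
  | cons a t ih =>
    simp only [List.count_cons, List.map_cons, List.sum_cons, ← ih]
    push_cast
    rw [Finset.sum_congr rfl (fun x _ => add_mul ((t.count x : ℂ)) _ (f x)),
      Finset.sum_add_distrib, add_comm]
    congr 1
    simp [beq_iff_eq, ite_mul, zero_mul, one_mul, Finset.sum_ite_eq]

lemma map_ite_sum {n : ℕ} (c : Fin n) (x : ℂ) (l : List (Fin n)) :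
    (l.map (fun a => (if a = c then (1:ℂ) else 0) * x)).sum = (l.count c : ℂ) * x := by
  induction l with
  | nil => simp
  | cons a t ih =>
    simp only [List.map_cons, List.sum_cons, ih, List.count_cons]
    push_cast
    by_cases h : a = c
    · subst h; simp; ring
    · simp [h, beq_iff_eq, Ne.symm h]

lemma sum_PS {n : ℕ} (σ : Fin n → List (Fin n)) (g : Fin n → Fin n → ℂ) :
    ∑ e : PS σ, g e.1 (psLetter σ e) = ∑ b : Fin n, ((σ b).map (g b)).sum := by
  rw [← Finset.univ_sigma_univ, Finset.sum_sigma]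
  exact Finset.sum_congr rfl fun b _ => by simp [psLetter, Fin.sum_univ_fun_getElem]

/-- (i) If `M_σ u = λ u` then the lift `[u]_{(b:pas)} = u_b` satisfies
`A [u] = λ [u]`.  (ii) If `ᵗM_σ v = λ v` then the lift `[v]_{(b:pas)} = v_a` satisfies
`ᵗA [v] = λ [v]`. -/
theorem statement1 {n : ℕ} (σ : Fin n → List (Fin n)) (lam : ℂ) :
    (∀ u : Fin n → ℂ, ((incMat σ).map (Int.cast : ℤ → ℂ)).mulVec u = lam • u →
      ((transMat σ).map (Int.cast : ℤ → ℂ)).mulVec (fun e : PS σ => u e.1) =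
        lam • (fun e : PS σ => u e.1)) ∧
    (∀ v : Fin n → ℂ, ((incMat σ).map (Int.cast : ℤ → ℂ)).transpose.mulVec v = lam • v →
      ((transMat σ).map (Int.cast : ℤ → ℂ)).transpose.mulVec
          (fun e : PS σ => v (psLetter σ e)) =
        lam • (fun e : PS σ => v (psLetter σ e))) := by
  constructor
  · intro u hu
    funext e
    have h1 := congrFun hu e.1
    simp only [Matrix.mulVec, Matrix.map_apply, dotProduct, incMat, transMat,
      Pi.smul_apply, smul_eq_mul, Int.cast_natCast] at h1 ⊢
    simp only [apply_ite (Int.cast : ℤ → ℂ), Int.cast_one, Int.cast_zero]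
    calc ∑ J : PS σ, (if psLetter σ J = e.1 then (1:ℂ) else 0) * u J.1
        = ∑ b : Fin n, ((σ b).map (fun a => (if a = e.1 then (1:ℂ) else 0) * u b)).sum :=
          sum_PS σ (fun b a => (if a = e.1 then (1:ℂ) else 0) * u b)
      _ = ∑ b : Fin n, ((σ b).count e.1 : ℂ) * u b := by
          exact Finset.sum_congr rfl fun b _ => map_ite_sum e.1 (u b) (σ b)
      _ = lam * u e.1 := h1
  · intro v hv
    funext e
    have h1 := congrFun hv (psLetter σ e)
    simp only [Matrix.mulVec, Matrix.map_apply, Matrix.transpose_apply, dotProduct,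
      incMat, transMat, Pi.smul_apply, smul_eq_mul, Int.cast_natCast] at h1 ⊢
    simp only [apply_ite (Int.cast : ℤ → ℂ), Int.cast_one, Int.cast_zero]
    calc ∑ J : PS σ, (if psLetter σ e = J.1 then (1:ℂ) else 0) * v (psLetter σ J)
        = ∑ b : Fin n, ((σ b).map (fun a => (if psLetter σ e = b then (1:ℂ) else 0) * v a)).sum :=
          sum_PS σ (fun b a => (if psLetter σ e = b then (1:ℂ) else 0) * v a)
      _ = ((σ (psLetter σ e)).map v).sum := by
          rw [Finset.sum_eq_single (psLetter σ e)]
          · simp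
          · intro b _ hb
            have hb' : psLetter σ e ≠ b := fun h => hb h.symm
            simp [hb']
          · simp
      _ = ∑ i : Fin n, ((σ (psLetter σ e)).count i : ℂ) * v i := (sum_count_mul _ _).symm
      _ = lam * v (psLetter σ e) := h1


end PisotPaper
end

section
/- Let σ be an irreducible Pisot substitution, let α_1, …, α_n ∈ ℂ be the (necessarily simple) eigenvalues of M_σ, and let D = #E. Then ℂ^D = Ker A ⊕ W_{α_1} ⊕ ⋯ ⊕ W_{α_n}, where W_{α_i} is the eigenspace of the transition matrix A for the eigenvalue α_i; each W_{α_i} is one-dimensional, dim Ker A = D − n, and A is diagonalizable over ℂ. -/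
open scoped BigOperators

namespace PisotPaper

/-! ### Auxiliary material -/

open Polynomial Matrix Module

section Aux

variable {n : ℕ} (σ : Fin n → List (Fin n))

/-- The "state-to-letter" rectangular matrix `E`. -/
noncomputable def Em : Matrix (PS σ) (Fin n) ℂ := fun I a => if I.1 = a then 1 else 0

/-- The rectangular matrix `F` recording the distinguished letter. -/
noncomputable def Fm : Matrix (Fin n) (PS σ) ℂ := fun a J => if psLetter σ J = a then 1 else 0

lemma hEF : Em σ * Fm σ = (transMat σ).map (Int.cast : ℤ → ℂ) := by
  ext I J
  simp only [Matrix.mul_apply, Em, Fm, ite_mul, one_mul, zero_mul, Matrix.map_apply, transMat]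
  rw [Finset.sum_ite_eq]
  simp [eq_comm]

lemma sum_ite_get (l : List (Fin n)) (a : Fin n) :
    (∑ j : Fin l.length, if l.get j = a then (1:ℂ) else 0) = (l.count a : ℂ) := by
  induction l with
  | nil => simp
  | cons x l ih =>
    show (∑ j : Fin (l.length + 1), if (x :: l).get j = a then (1:ℂ) else 0) = _
    rw [Fin.sum_univ_succ]
    simp only [List.get_cons_succ, ih, List.count_cons, List.get_cons_zero]
    push_cast
    rw [add_comm]
    congr 1
    simp only [beq_iff_eq]
    by_cases h : x = a <;> simp [h]

lemma hFE : Fm σ * Em σ = (incMat σ).map (Int.cast : ℤ → ℂ) := by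
  ext a b
  rw [Matrix.mul_apply, ← Finset.univ_sigma_univ, Finset.sum_sigma]
  simp only [Fm, Em, mul_ite, mul_one, mul_zero]
  have key : ∀ x : Fin n, (∑ j : Fin (σ x).length,
      if x = b then (if psLetter σ ⟨x, j⟩ = a then (1:ℂ) else 0) else 0)
      = if x = b then ((σ x).count a : ℂ) else 0 := by
    intro x
    by_cases hx : x = b
    · subst hx
      simp only [eq_self_iff_true, if_true, psLetter]
      exact sum_ite_get _ _
    · simp [hx]
  rw [Finset.sum_congr rfl fun x _ => key x, Finset.sum_ite_eq', if_pos (Finset.mem_univ b)]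
  simp [incMat]

variable {m p : Type*} [Fintype m] [Fintype p] [DecidableEq m] [DecidableEq p]

lemma gen_shift (E : Matrix m p ℂ) (F : Matrix p m ℂ) (k : ℕ) :
    (E * F) ^ (k + 1) = E * (F * E) ^ k * F := by
  induction k with
  | zero => simp
  | succ k ih =>
    rw [pow_succ, ih, pow_succ]
    simp only [Matrix.mul_assoc]

lemma gen_key (E : Matrix m p ℂ) (F : Matrix p m ℂ) (q : Polynomial ℂ) :
    (E * F) * (Polynomial.aeval (E * F) q) = E * (Polynomial.aeval (F * E) q) * F := by
  rw [Polynomial.aeval_eq_sum_range, Polynomial.aeval_eq_sum_range, Finset.mul_sum,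
    Matrix.mul_sum, Matrix.sum_mul]
  refine Finset.sum_congr rfl fun i _ => ?_
  rw [mul_smul_comm, ← pow_succ', gen_shift, Matrix.mul_smul, Matrix.smul_mul]

lemma eval_charpoly' (M : Matrix m m ℂ) (r : ℂ) :
    M.charpoly.eval r = (Matrix.scalar m r - M).det := by
  rw [Matrix.charpoly, _root_.eval_det, matPolyEquiv_charmatrix]
  simp

lemma scalar_mulVec (r : ℂ) (v : m → ℂ) : (Matrix.scalar m r) *ᵥ v = r • v := by
  ext i
  simp [Matrix.scalar, Matrix.mulVec_diagonal]

end Aux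

/-- For an irreducible Pisot substitution with (simple) eigenvalues
`α_1, …, α_n` of `M_σ`, the space `ℂ^D` decomposes as the internal direct sum of `Ker A`
and the eigenspaces `W_{α_i}` of the transition matrix `A`; each `W_{α_i}` is
one-dimensional, `dim Ker A = D − n`, and `A` is diagonalizable over `ℂ`. -/
theorem statement2 {n : ℕ} (hn : 2 ≤ n) (σ : Fin n → List (Fin n)) (α : ℝ)
    (hσ : IsIrredPisot σ α) (αs : Fin n → ℂ) (hinj : Function.Injective αs)
    (hroot : ∀ i, ((incMat σ).map (Int.cast : ℤ → ℂ)).charpoly.IsRoot (αs i)) :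
    DirectSum.IsInternal (fun o : Option (Fin n) =>
      o.elim (LinearMap.ker (Matrix.toLin' ((transMat σ).map (Int.cast : ℤ → ℂ))))
        (fun i => Module.End.eigenspace
          (Matrix.toLin' ((transMat σ).map (Int.cast : ℤ → ℂ))) (αs i))) ∧
    (∀ i, Module.finrank ℂ
        (Module.End.eigenspace
          (Matrix.toLin' ((transMat σ).map (Int.cast : ℤ → ℂ))) (αs i)) = 1) ∧
    Module.finrank ℂ
        (LinearMap.ker (Matrix.toLin' ((transMat σ).map (Int.cast : ℤ → ℂ)))) =
      Fintype.card (PS σ) - n ∧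
    (⨆ μ : ℂ, Module.End.eigenspace
        (Matrix.toLin' ((transMat σ).map (Int.cast : ℤ → ℂ))) μ) = ⊤ := by
  classical
  obtain ⟨hnil, hirr, -, -⟩ := hσ
  set Ac : Matrix (PS σ) (PS σ) ℂ := (transMat σ).map (Int.cast : ℤ → ℂ) with hAc
  set Mc : Matrix (Fin n) (Fin n) ℂ := (incMat σ).map (Int.cast : ℤ → ℂ) with hMc
  set A' : (PS σ → ℂ) →ₗ[ℂ] (PS σ → ℂ) := Matrix.toLin' Ac with hA'
  set Mq : Matrix (Fin n) (Fin n) ℚ := (incMat σ).map (Int.cast : ℤ → ℚ) with hMq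
  -- charpoly facts
  have hMqc : Mc = Mq.map (algebraMap ℚ ℂ) := by
    ext i j
    simp [hMc, hMq, Matrix.map_apply]
  have hcp_map : Mc.charpoly = Mq.charpoly.map (algebraMap ℚ ℂ) := by
    rw [hMqc, Matrix.charpoly_map]
  have hdegQ : Mq.charpoly.natDegree = n := by
    simp [Matrix.charpoly_natDegree_eq_dim]
  have hdeg : Mc.charpoly.natDegree = n := by
    simp [Matrix.charpoly_natDegree_eq_dim]
  -- nonvanishing of the eigenvalues
  have hne0 : ∀ i, αs i ≠ 0 := by
    intro i h0
    have h1 : Mq.charpoly.eval 0 = 0 := by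
      have h2 := hroot i
      rw [h0] at h2
      rw [show ((incMat σ).map (Int.cast : ℤ → ℂ)).charpoly = Mc.charpoly from rfl,
        hcp_map, Polynomial.IsRoot, Polynomial.eval_zero_map] at h2
      simpa using h2
    have hXdvd : (Polynomial.X : Polynomial ℚ) ∣ Mq.charpoly :=
      Polynomial.X_dvd_iff.mpr (by rw [Polynomial.coeff_zero_eq_eval_zero]; exact h1)
    obtain ⟨u, hu⟩ := hXdvd
    rcases hirr.isUnit_or_isUnit hu with h | h
    · exact Polynomial.not_isUnit_X h
    · have hu0 : u ≠ 0 := by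
        rintro rfl
        rw [mul_zero] at hu
        exact (Matrix.charpoly_monic _).ne_zero hu
      have h3 : Mq.charpoly.natDegree = 1 + u.natDegree := by
        rw [hu, Polynomial.natDegree_mul Polynomial.X_ne_zero hu0, Polynomial.natDegree_X]
      rw [Polynomial.natDegree_eq_zero_of_isUnit h] at h3
      omega
  -- the characteristic polynomial over ℂ is the product of distinct linear factors
  have hprod : Mc.charpoly = ∏ i, (Polynomial.X - Polynomial.C (αs i)) := by
    have hpair : (↑(Finset.univ : Finset (Fin n)) : Set (Fin n)).Pairwise
        (Function.onFun IsCoprime fun i => Polynomial.X - Polynomial.C (αs i)) :=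
      fun i _ j _ hij => Polynomial.pairwise_coprime_X_sub_C hinj hij
    have hdvd : (∏ i, (Polynomial.X - Polynomial.C (αs i))) ∣ Mc.charpoly :=
      Finset.prod_dvd_of_coprime hpair fun i _ => Polynomial.dvd_iff_isRoot.mpr (hroot i)
    obtain ⟨u, hu⟩ := hdvd
    have hmonicP : (∏ i, (Polynomial.X - Polynomial.C (αs i))).Monic :=
      Polynomial.monic_prod_of_monic _ _ fun i _ => Polynomial.monic_X_sub_C _
    have hdegP : (∏ i, (Polynomial.X - Polynomial.C (αs i))).natDegree = n := by
      rw [Polynomial.natDegree_prod_of_monic _ _ fun i _ => Polynomial.monic_X_sub_C _]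
      simp [Polynomial.natDegree_X_sub_C]
    have hu0 : u ≠ 0 := by
      rintro rfl
      rw [mul_zero] at hu
      exact (Matrix.charpoly_monic _).ne_zero hu
    have hdu : u.natDegree = 0 := by
      have h4 := hdeg
      rw [hu, Polynomial.natDegree_mul hmonicP.ne_zero hu0, hdegP] at h4
      omega
    have hmu : u.Monic := by
      have h5 := Matrix.charpoly_monic Mc
      rw [hu] at h5
      exact Polynomial.Monic.of_mul_monic_left hmonicP h5
    rw [hu, Polynomial.Monic.natDegree_eq_zero hmu |>.mp hdu, mul_one]
  -- the extended root family
  set c : Option (Fin n) → ℂ := fun o => o.elim 0 αs with hc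
  have hcinj : Function.Injective c := by
    rintro (_ | i) (_ | j) h
    · rfl
    · exact absurd h.symm (hne0 j)
    · exact absurd h (hne0 i)
    · exact congrArg some (hinj h)
  set q : Polynomial ℂ := ∏ o : Option (Fin n), (Polynomial.X - Polynomial.C (c o)) with hq
  have hqX : q = Polynomial.X * Mc.charpoly := by
    rw [hq, Fintype.prod_option, hprod]
    simp [hc]
  have hsf : Squarefree q := (Polynomial.separable_prod_X_sub_C_iff.mpr hcinj).squarefree
  have hEFA : Em σ * Fm σ = Ac := hEF σ
  have hFEM : Fm σ * Em σ = Mc := hFE σ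
  have haevalM : Polynomial.aeval Ac q = 0 := by
    rw [hqX, _root_.map_mul, Polynomial.aeval_X, ← hEFA, gen_key, hFEM,
      Matrix.aeval_self_charpoly]
    simp
  have hA'e : A' = Matrix.toLinAlgEquiv' Ac := by
    ext v
    simp [hA', Matrix.toLinAlgEquiv'_apply]
  have haevalB : Polynomial.aeval A' q = 0 := by
    rw [hA'e]
    show Polynomial.aeval
      ((Matrix.toLinAlgEquiv' : Matrix (PS σ) (PS σ) ℂ ≃ₐ[ℂ] _).toAlgHom Ac) q = 0
    rw [Polynomial.aeval_algHom_apply, haevalM, map_zero]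
  -- semisimplicity and the full eigenspace supremum
  have hss : Module.End.IsSemisimple A' :=
    Module.End.isSemisimple_of_squarefree_aeval_eq_zero hsf haevalB
  have hTopAll : (⨆ μ : ℂ, Module.End.eigenspace A' μ) = ⊤ := by
    have h1 := Module.End.iSup_maxGenEigenspace_eq_top A'
    calc (⨆ μ : ℂ, Module.End.eigenspace A' μ)
        = ⨆ μ : ℂ, Module.End.maxGenEigenspace A' μ := by
          refine iSup_congr fun μ => ?_
          rw [hss.isFinitelySemisimple.maxGenEigenspace_eq_eigenspace]
      _ = ⊤ := h1
  -- each αs i is an eigenvalue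
  have hev : ∀ i, Module.End.eigenspace A' (αs i) ≠ ⊥ := by
    intro i
    have hdet : (Matrix.scalar (Fin n) (αs i) - Mc).det = 0 := by
      rw [← eval_charpoly']
      exact hroot i
    obtain ⟨v, hv0, hv⟩ := Matrix.exists_mulVec_eq_zero_iff.mpr hdet
    have hMv : Mc *ᵥ v = αs i • v := by
      rw [Matrix.sub_mulVec, sub_eq_zero, scalar_mulVec] at hv
      exact hv.symm
    obtain ⟨a, ha⟩ := Function.ne_iff.mp hv0
    have hlen : 0 < (σ a).length := List.length_pos_iff.mpr (hnil a)
    set u : PS σ → ℂ := Em σ *ᵥ v with hu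
    have hu0 : u ≠ 0 := by
      intro h
      have h6 := congrFun h ⟨a, ⟨0, hlen⟩⟩
      simp only [hu, Matrix.mulVec, dotProduct, Em, ite_mul, one_mul, zero_mul,
        Finset.sum_ite_eq, Finset.mem_univ, if_true, Pi.zero_apply] at h6
      exact ha h6
    have hAu : A' u = αs i • u := by
      rw [hA', Matrix.toLin'_apply, hu, Matrix.mulVec_mulVec, ← hEFA, Matrix.mul_assoc,
        hFEM, ← Matrix.mulVec_mulVec, hMv, Matrix.mulVec_smul]
    exact Submodule.ne_bot_iff _ |>.mpr
      ⟨u, Module.End.mem_eigenspace_iff.mpr hAu, hu0⟩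
  -- the spanning property for the chosen eigenvalues
  have hTopS : (⨆ o : Option (Fin n), Module.End.eigenspace A' (c o)) = ⊤ := by
    rw [eq_top_iff, ← hTopAll]
    refine iSup_le fun μ => ?_
    by_cases hμ : Module.End.eigenspace A' μ = ⊥
    · rw [hμ]
      exact bot_le
    · have hev' : Module.End.HasEigenvalue A' μ := hμ
      have hr : (minpoly ℂ A').IsRoot μ := Module.End.isRoot_of_hasEigenvalue hev'
      have hdvdq : minpoly ℂ A' ∣ q := minpoly.dvd ℂ A' haevalB
      have hq0 : q.IsRoot μ := hr.dvd hdvdq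
      rw [hq, Polynomial.IsRoot, Polynomial.eval_prod, Finset.prod_eq_zero_iff] at hq0
      obtain ⟨o, -, ho⟩ := hq0
      simp only [Polynomial.eval_sub, Polynomial.eval_X, Polynomial.eval_C,
        sub_eq_zero] at ho
      exact ho ▸ le_iSup (fun o => Module.End.eigenspace A' (c o)) o
  have hSeq : (fun o : Option (Fin n) => o.elim (LinearMap.ker A')
      fun i => Module.End.eigenspace A' (αs i))
      = fun o => Module.End.eigenspace A' (c o) := by
    funext o
    cases o with
    | none => simp [hc, Module.End.eigenspace_zero]
    | some i => simp [hc]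
  have hIndep : iSupIndep fun o : Option (Fin n) => Module.End.eigenspace A' (c o) :=
    (Module.End.eigenspaces_iSupIndep A').comp hcinj
  have hInternal : DirectSum.IsInternal (fun o : Option (Fin n) =>
      o.elim (LinearMap.ker A') fun i => Module.End.eigenspace A' (αs i)) := by
    rw [hSeq]
    exact (DirectSum.isInternal_submodule_iff_iSupIndep_and_iSup_eq_top _).mpr
      ⟨hIndep, hTopS⟩
  -- dimension bookkeeping
  have hD : Module.finrank ℂ (PS σ → ℂ) = Fintype.card (PS σ) := by
    simp
  have hsumdim : Module.finrank ℂ (LinearMap.ker A')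
      + (∑ i, Module.finrank ℂ (Module.End.eigenspace A' (αs i)))
      = Fintype.card (PS σ) := by
    have h1 := (LinearEquiv.ofBijective (DirectSum.coeLinearMap _) hInternal).finrank_eq
    rw [Module.finrank_directSum, Fintype.sum_option, hD] at h1
    simp at h1 ⊢
    convert h1 using 2 <;> rfl
  have hrank_le : Module.finrank ℂ (LinearMap.range A') ≤ n := by
    have hcomp : A' = (Matrix.toLin' (Em σ)).comp (Matrix.toLin' (Fm σ)) := by
      rw [hA', ← hEFA, Matrix.toLin'_mul]
    calc Module.finrank ℂ (LinearMap.range A')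
        ≤ Module.finrank ℂ (LinearMap.range (Matrix.toLin' (Em σ))) := by
          rw [hcomp]
          exact Submodule.finrank_mono (LinearMap.range_comp_le_range _ _)
      _ ≤ Module.finrank ℂ (Fin n → ℂ) := (Matrix.toLin' (Em σ)).finrank_range_le
      _ = n := by simp
  have hrn := LinearMap.finrank_range_add_finrank_ker A'
  rw [hD] at hrn
  have hone : ∀ i, 1 ≤ Module.finrank ℂ (Module.End.eigenspace A' (αs i)) := by
    intro i
    have : Nontrivial (Module.End.eigenspace A' (αs i)) :=
      Submodule.nontrivial_iff_ne_bot.mpr (hev i)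
    exact Module.finrank_pos
  have hsum_ge : n ≤ ∑ i, Module.finrank ℂ (Module.End.eigenspace A' (αs i)) := by
    calc n = ∑ _i : Fin n, 1 := by simp
      _ ≤ _ := Finset.sum_le_sum fun i _ => hone i
  have hsum_le : (∑ i, Module.finrank ℂ (Module.End.eigenspace A' (αs i))) ≤ n := by
    omega
  have heach : ∀ i, Module.finrank ℂ (Module.End.eigenspace A' (αs i)) = 1 := by
    intro i
    by_contra hne1
    have h2 : 2 ≤ Module.finrank ℂ (Module.End.eigenspace A' (αs i)) := by
      have := hone i
      omega
    have h3 : (∑ _i : Fin n, 1)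
        < ∑ i, Module.finrank ℂ (Module.End.eigenspace A' (αs i)) :=
      Finset.sum_lt_sum (fun j _ => hone j) ⟨i, Finset.mem_univ i, by omega⟩
    simp only [Finset.sum_const, Finset.card_univ, Fintype.card_fin, smul_eq_mul,
      mul_one] at h3
    omega
  have hker : Module.finrank ℂ (LinearMap.ker A') = Fintype.card (PS σ) - n := by
    have h7 : (∑ i, Module.finrank ℂ (Module.End.eigenspace A' (αs i))) = n := by
      omega
    omega
  exact ⟨hInternal, heach, hker, hTopAll⟩

end PisotPaper
end

section
/- Let σ be an irreducible Pisot substitution with simple eigenvalues α_1, …, α_n of M_σ; for each i choose eigenvectors u_i, v_i ∈ ℂⁿ with M_σ u_i = α_i u_i and ᵗM_σ v_i = α_i v_i, and lift them to [u_i], [v_i] ∈ ℂ^E by [u_i]_{(b : p a s)} = (u_i)_b and [v_i]_{(b : p a s)} = (v_i)_a. Then for every i the bilinear pairing Σ_{K∈E} [u_i]_K [v_i]_K is nonzero, and for all integers k ≥ 1 and all I, J ∈ E, the number of admissible paths of length k+1 from I to J satisfies (A^k)_{IJ} = Σ_{i=1}^n α_i^k [u_i]_I [v_i]_J / (Σ_{K∈E}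 [u_i]_K [v_i]_K). -/
open scoped BigOperators

namespace PisotPaper

lemma sum_get_eq_sum_count {n : ℕ} (l : List (Fin n)) (f : Fin n → ℂ) :
    ∑ pos : Fin l.length, f (l.get pos) = ∑ a : Fin n, (l.count a : ℂ) * f a := by
  induction l with
  | nil => simp
  | cons x t ih =>
    have h0 : ∑ pos : Fin (x :: t).length, f ((x :: t).get pos)
        = f x + ∑ pos : Fin t.length, f (t.get pos) := by
      show ∑ pos : Fin (t.length + 1), f ((x :: t).get pos) = _
      rw [Fin.sum_univ_succ]
      rfl
    rw [h0, ih]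
    have : ∀ a : Fin n, ((x :: t).count a : ℂ) * f a
        = (t.count a : ℂ) * f a + (if a = x then f a else 0) := by
      intro a
      rcases eq_or_ne a x with rfl | hax
      · simp [List.count_cons]; ring
      · simp [List.count_cons, hax, hax.symm]
    rw [Finset.sum_congr rfl fun a _ => this a, Finset.sum_add_distrib]
    simp [add_comm]

/-- With eigenvectors `u_i, v_i` of `M_σ` (and their lifts
`[u_i]_{(b:pas)} = (u_i)_b`, `[v_i]_{(b:pas)} = (v_i)_a`), each pairing
`Σ_K [u_i]_K [v_i]_K` is nonzero and for all `k ≥ 1`,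
`(A^k)_{IJ} = Σ_i α_i^k [u_i]_I [v_i]_J / (Σ_K [u_i]_K [v_i]_K)`. -/
theorem statement3 {n : ℕ} (hn : 2 ≤ n) (σ : Fin n → List (Fin n)) (α : ℝ)
    (hσ : IsIrredPisot σ α) (αs : Fin n → ℂ) (hinj : Function.Injective αs)
    (hroot : ∀ i, ((incMat σ).map (Int.cast : ℤ → ℂ)).charpoly.IsRoot (αs i))
    (u v : Fin n → (Fin n → ℂ))
    (hu0 : ∀ i, u i ≠ 0) (hv0 : ∀ i, v i ≠ 0)
    (hu : ∀ i, ((incMat σ).map (Int.cast : ℤ → ℂ)).mulVec (u i) = αs i • u i)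
    (hv : ∀ i, ((incMat σ).map (Int.cast : ℤ → ℂ)).transpose.mulVec (v i) = αs i • v i) :
    (∀ i, (∑ K : PS σ, u i K.1 * v i (psLetter σ K)) ≠ 0) ∧
    ∀ k : ℕ, 1 ≤ k → ∀ I J : PS σ,
      (((transMat σ).map (Int.cast : ℤ → ℂ)) ^ k) I J =
        ∑ i : Fin n, αs i ^ k * (u i I.1 * v i (psLetter σ J)) /
          (∑ K : PS σ, u i K.1 * v i (psLetter σ K)) := by
  classical
  set M : Matrix (Fin n) (Fin n) ℂ := (incMat σ).map (Int.cast : ℤ → ℂ) with hMdef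
  set S : Fin n → ℂ := fun i => ∑ b, u i b * v i b with hSdef
  -- entry description of M
  have hMentry : ∀ a b, M a b = ((σ b).count a : ℂ) := by
    intro a b; simp [hMdef, incMat, Matrix.map_apply]
  -- orthogonality
  have horth : ∀ i j, i ≠ j → ∑ b, v i b * u j b = 0 := by
    intro i j hij
    have key : αs i * (∑ b, v i b * u j b) = αs j * (∑ b, v i b * u j b) := by
      calc αs i * (∑ b, v i b * u j b)
          = ∑ b, (M.transpose.mulVec (v i)) b * u j b := by
            rw [hv i]
            rw [Finset.mul_sum]
            exact Finset.sum_congr rfl fun b _ => by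
              simp [Pi.smul_apply, smul_eq_mul]; ring
        _ = ∑ a, v i a * (M.mulVec (u j)) a := by
            simp only [Matrix.mulVec, dotProduct, Matrix.transpose_apply,
              Finset.sum_mul, Finset.mul_sum]
            rw [Finset.sum_comm]
            exact Finset.sum_congr rfl fun a _ =>
              Finset.sum_congr rfl fun b _ => by ring
        _ = αs j * (∑ b, v i b * u j b) := by
            rw [hu j, Finset.mul_sum]
            exact Finset.sum_congr rfl fun b _ => by
              simp [Pi.smul_apply, smul_eq_mul]; ring
    have hne : αs i - αs j ≠ 0 := sub_ne_zero.2 fun h => hij (hinj h)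
    have := sub_eq_zero.2 key
    rw [← sub_mul] at this
    exact (mul_eq_zero.1 this).resolve_left hne
  -- u is a basis
  have hLI : LinearIndependent ℂ u := by
    apply Module.End.eigenvectors_linearIndependent' (Matrix.mulVecLin M) αs hinj
    intro i
    refine ⟨(Module.End.mem_eigenspace_iff).2 ?_, hu0 i⟩
    simpa [Matrix.mulVecLin_apply] using hu i
  haveI : Nonempty (Fin n) := ⟨⟨0, by omega⟩⟩
  have hcard : Fintype.card (Fin n) = Module.finrank ℂ (Fin n → ℂ) := by simp
  let B : Module.Basis (Fin n) ℂ (Fin n → ℂ) := basisOfLinearIndependentOfCardEqFinrank hLI hcard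
  have hB : ∀ j, B j = u j := fun j => by
    simp [B, coe_basisOfLinearIndependentOfCardEqFinrank]
  -- S i ≠ 0
  have hS0 : ∀ i, S i ≠ 0 := by
    intro i hSi
    have hvz : ∀ j, ∑ b, v i b * u j b = 0 := by
      intro j
      rcases eq_or_ne i j with rfl | hij
      · rw [← hSi, hSdef]
        exact Finset.sum_congr rfl fun b _ => mul_comm _ _
      · exact horth i j hij
    apply hv0 i
    funext b
    have hb : (Pi.single b 1 : Fin n → ℂ) = ∑ j, B.repr (Pi.single b 1) j • u j := by
      conv_lhs => rw [← B.sum_repr (Pi.single b 1)]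
      exact Finset.sum_congr rfl fun j _ => by rw [hB j]
    have : v i b = ∑ c, v i c * (Pi.single b 1 : Fin n → ℂ) c := by
      simp [Pi.single_apply]
    rw [this, hb]
    calc ∑ c, v i c * (∑ j, B.repr (Pi.single b 1) j • u j) c
        = ∑ c, ∑ j, B.repr (Pi.single b 1) j * (v i c * u j c) := by
          exact Finset.sum_congr rfl fun c _ => by
            simp [Finset.sum_apply, Finset.mul_sum]
            exact Finset.sum_congr rfl fun j _ => by ring
      _ = ∑ j, B.repr (Pi.single b 1) j * ∑ c, v i c * u j c := by
          rw [Finset.sum_comm]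
          exact Finset.sum_congr rfl fun j _ => by rw [Finset.mul_sum]
      _ = 0 := by simp [hvz]
  -- spectral decomposition
  set N : ℕ → Matrix (Fin n) (Fin n) ℂ :=
    fun m => Matrix.of fun a c => ∑ i, αs i ^ m * u i a * v i c / S i with hNdef
  have step1 : ∀ m j, (M ^ m).mulVec (u j) = αs j ^ m • u j := by
    intro m j
    induction m with
    | zero => simp [Matrix.one_mulVec]
    | succ m ih =>
      rw [pow_succ', ← Matrix.mulVec_mulVec, ih, Matrix.mulVec_smul, hu j,
        smul_smul]
      rw [pow_succ]
  have step2 : ∀ m j, (N m).mulVec (u j) = αs j ^ m • u j := by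
    intro m j
    funext a
    have : (N m).mulVec (u j) a
        = ∑ i, (αs i ^ m * u i a / S i) * ∑ c, v i c * u j c := by
      simp only [Matrix.mulVec, dotProduct, hNdef, Matrix.of_apply,
        Finset.sum_mul, Finset.mul_sum]
      rw [Finset.sum_comm]
      exact Finset.sum_congr rfl fun i _ => Finset.sum_congr rfl fun c _ => by ring
    rw [this, Finset.sum_eq_single j]
    · have hSj : ∑ c, v j c * u j c = S j := by
        rw [hSdef]
        exact Finset.sum_congr rfl fun c _ => mul_comm _ _
      rw [hSj, div_mul_cancel₀ _ (hS0 j)]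
      simp
    · intro i _ hij
      rw [horth i j (by exact hij), mul_zero]
    · intro h; exact absurd (Finset.mem_univ j) h
  have spec : ∀ m, M ^ m = N m := by
    intro m
    have hLin : Matrix.mulVecLin (M ^ m) = Matrix.mulVecLin (N m) := by
      apply Module.Basis.ext B
      intro j
      rw [hB j]
      simp only [Matrix.mulVecLin_apply]
      rw [step1 m j, step2 m j]
    ext a c
    have h1 := congrFun (congrArg (fun f => f (Pi.single c 1)) (congrArg DFunLike.coe hLin)) a
    simpa [Matrix.mulVecLin_apply, Matrix.mulVec_single] using h1
  -- transition matrix entries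
  set A : Matrix (PS σ) (PS σ) ℂ := (transMat σ).map (Int.cast : ℤ → ℂ) with hAdef
  have hAentry : ∀ I J : PS σ, A I J = if psLetter σ J = I.1 then 1 else 0 := by
    intro I J
    simp only [hAdef, transMat, Matrix.map_apply]
    split <;> simp
  -- path counting
  have path : ∀ k : ℕ, ∀ I J : PS σ, (A ^ (k + 1)) I J = (M ^ k) I.1 (psLetter σ J) := by
    intro k
    induction k with
    | zero =>
      intro I J
      rw [pow_one, pow_zero, hAentry, Matrix.one_apply]
      by_cases h : psLetter σ J = I.1
      · rw [if_pos h, if_pos h.symm]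
      · rw [if_neg h, if_neg fun h' => h h'.symm]
    | succ k ih =>
      intro I J
      rw [pow_succ, Matrix.mul_apply]
      calc ∑ K : PS σ, (A ^ (k + 1)) I K * A K J
          = ∑ K : PS σ, (M ^ k) I.1 (psLetter σ K) * (if psLetter σ J = K.1 then 1 else 0) := by
            exact Finset.sum_congr rfl fun K _ => by rw [ih, hAentry]
        _ = ∑ b : Fin n, (if psLetter σ J = b then
              ∑ pos : Fin (σ b).length, (M ^ k) I.1 ((σ b).get pos) else 0) := by
            rw [← Finset.univ_sigma_univ, Finset.sum_sigma]
            exact Finset.sum_congr rfl fun b _ => by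
              by_cases h : psLetter σ J = b
              · rw [if_pos h]
                exact Finset.sum_congr rfl fun pos _ => by
                  rw [if_pos h, mul_one]; rfl
              · rw [if_neg h]
                rw [Finset.sum_eq_zero]
                intro pos _
                rw [if_neg h, mul_zero]
        _ = ∑ pos : Fin (σ (psLetter σ J)).length,
              (M ^ k) I.1 ((σ (psLetter σ J)).get pos) := by
            rw [Finset.sum_ite_eq]
            simp
        _ = ∑ a : Fin n, ((σ (psLetter σ J)).count a : ℂ) * (M ^ k) I.1 a := by
            exact sum_get_eq_sum_count _ _
        _ = ∑ a : Fin n, (M ^ k) I.1 a * M a (psLetter σ J) := by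
            exact Finset.sum_congr rfl fun a _ => by rw [hMentry]; ring
        _ = (M ^ (k + 1)) I.1 (psLetter σ J) := by
            rw [pow_succ, Matrix.mul_apply]
  -- denominator
  have hD : ∀ i, (∑ K : PS σ, u i K.1 * v i (psLetter σ K)) = αs i * S i := by
    intro i
    have inner : ∀ b, ∑ pos : Fin (σ b).length, v i ((σ b).get pos) = αs i * v i b := by
      intro b
      rw [sum_get_eq_sum_count]
      have h := congrFun (hv i) b
      simp only [Matrix.mulVec, dotProduct, Matrix.transpose_apply,
        Pi.smul_apply, smul_eq_mul] at h
      rw [← h]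
      exact Finset.sum_congr rfl fun a _ => by rw [hMentry]
    rw [← Finset.univ_sigma_univ, Finset.sum_sigma]
    calc ∑ b : Fin n, ∑ pos : Fin (σ b).length, u i b * v i ((σ b).get pos)
        = ∑ b : Fin n, u i b * (αs i * v i b) := by
          exact Finset.sum_congr rfl fun b _ => by
            rw [← Finset.mul_sum, inner b]
      _ = αs i * S i := by
          rw [hSdef, Finset.mul_sum]
          exact Finset.sum_congr rfl fun b _ => by ring
  -- αs i ≠ 0
  have hα0 : ∀ i, αs i ≠ 0 := by
    intro i h0
    set p : Polynomial ℚ := ((incMat σ).map (Int.cast : ℤ → ℚ)).charpoly with hpdef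
    have hmats : M = ((incMat σ).map (Int.cast : ℤ → ℚ)).map (algebraMap ℚ ℂ) := by
      ext a b
      simp [hMdef, Matrix.map_apply, incMat]
    have hmap : M.charpoly = p.map (algebraMap ℚ ℂ) := by
      rw [hmats, Matrix.charpoly_map, hpdef]
    have hroot0 : p.IsRoot 0 := by
      have := hroot i
      rw [h0, hmap] at this
      have h2 : (algebraMap ℚ ℂ) (p.eval 0) = 0 := by
        rw [← Polynomial.eval_zero_map]
        exact this
      have := (map_eq_zero_iff (algebraMap ℚ ℂ) (algebraMap ℚ ℂ).injective).1 h2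
      exact this
    obtain ⟨q, hq⟩ := Polynomial.dvd_iff_isRoot.2 hroot0
    have hirr := hσ.2.1
    rw [← hpdef] at hirr
    rcases hirr.isUnit_or_isUnit hq with h | h
    · exact Polynomial.not_isUnit_X_sub_C (0 : ℚ) h
    · have hq0 : q ≠ 0 := fun h' => by simp [h'] at h
      have hdeg : p.natDegree = 1 := by
        rw [hq, Polynomial.natDegree_mul (Polynomial.X_sub_C_ne_zero 0) hq0,
          Polynomial.natDegree_X_sub_C, Polynomial.natDegree_eq_zero_of_isUnit h]
      have hdim : p.natDegree = n := by
        rw [hpdef, Matrix.charpoly_natDegree_eq_dim, Fintype.card_fin]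
      omega
  -- conclusion
  constructor
  · intro i
    rw [hD i]
    exact mul_ne_zero (hα0 i) (hS0 i)
  · intro k hk I J
    obtain ⟨m, rfl⟩ : ∃ m, k = m + 1 := ⟨k - 1, by omega⟩
    rw [path m I J, spec m]
    simp only [hNdef, Matrix.of_apply]
    refine Finset.sum_congr rfl fun i _ => ?_
    rw [hD i, pow_succ]
    rw [div_eq_div_iff (hS0 i) (mul_ne_zero (hα0 i) (hS0 i))]
    ring

end PisotPaper
end

section
/- Let M be an n×n matrix with rational entries whose characteristic polynomial is irreducible over ℚ, let α ∈ ℂ be an eigenvalue of M, and let v ∈ ℚ(α)ⁿ be a nonzero vector with ᵗM v = α v. Then the coordinates of v are linearly independent over ℚ; consequently, for w₁, w₂ ∈ ℚⁿ, one has ⟨w₁, v⟩ = ⟨w₂, v⟩ (standard bilinear pairing, evaluated in ℚ(α)) if and only if w₁ = w₂. -/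
open scoped BigOperators

open Polynomial

namespace PisotPaper

private lemma sum_mulVec' {n : ℕ} {ι : Type*} (s : Finset ι)
    (A : ι → Matrix (Fin n) (Fin n) ℚ) (w : Fin n → ℚ) :
    (∑ k ∈ s, A k).mulVec w = ∑ k ∈ s, (A k).mulVec w := by
  funext i
  simp only [Matrix.mulVec, dotProduct, Matrix.sum_apply, Finset.sum_apply,
    Finset.sum_mul]
  rw [Finset.sum_comm]

private lemma pairing_step {n : ℕ} (M : Matrix (Fin n) (Fin n) ℚ)
    (α : ℂ) (v : Fin n → ℂ)
    (hev : (M.map (algebraMap ℚ ℂ)).transpose.mulVec v = α • v)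
    (u : Fin n → ℚ) :
    ∑ i, ((M.mulVec u) i : ℂ) * v i = α * ∑ i, (u i : ℂ) * v i := by
  have hT : ∀ j, ∑ i, (M i j : ℂ) * v i = α * v j := by
    intro j
    have h := congrFun hev j
    simpa [Matrix.mulVec, Matrix.transpose_apply, Matrix.map_apply, dotProduct]
      using h
  calc ∑ i, ((M.mulVec u) i : ℂ) * v i
      = ∑ i, ∑ j, (u j : ℂ) * ((M i j : ℂ) * v i) := by
        refine Finset.sum_congr rfl fun i _ => ?_
        simp only [Matrix.mulVec, dotProduct]
        push_cast
        rw [Finset.sum_mul]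
        exact Finset.sum_congr rfl fun j _ => by ring
    _ = ∑ j, (u j : ℂ) * ∑ i, (M i j : ℂ) * v i := by
        rw [Finset.sum_comm]
        exact Finset.sum_congr rfl fun j _ => by rw [Finset.mul_sum]
    _ = ∑ j, (u j : ℂ) * (α * v j) :=
        Finset.sum_congr rfl fun j _ => by rw [hT j]
    _ = α * ∑ j, (u j : ℂ) * v j := by
        rw [Finset.mul_sum]
        exact Finset.sum_congr rfl fun j _ => by ring

private lemma pairing_pow {n : ℕ} (M : Matrix (Fin n) (Fin n) ℚ)
    (α : ℂ) (v : Fin n → ℂ)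
    (hev : (M.map (algebraMap ℚ ℂ)).transpose.mulVec v = α • v)
    (k : ℕ) (u : Fin n → ℚ) :
    ∑ i, (((M ^ k).mulVec u) i : ℂ) * v i = α ^ k * ∑ i, (u i : ℂ) * v i := by
  induction k generalizing u with
  | zero => simp [Matrix.one_mulVec]
  | succ k ih =>
    rw [pow_succ, ← Matrix.mulVec_mulVec, ih (M.mulVec u),
      pairing_step M α v hev u, pow_succ]
    ring

private lemma pairing_zero {n : ℕ} (M : Matrix (Fin n) (Fin n) ℚ)
    (hirr : Irreducible M.charpoly)
    (α : ℂ) (v : Fin n → ℂ)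
    (hev : (M.map (algebraMap ℚ ℂ)).transpose.mulVec v = α • v)
    (w : Fin n → ℚ) (hw : w ≠ 0)
    (hwv : ∑ i, (w i : ℂ) * v i = 0) : v = 0 := by
  have hn : n ≠ 0 := by
    rintro rfl
    exact hw (funext fun i => i.elim0)
  have hdeg : M.charpoly.natDegree = n := by
    simpa using M.charpoly_natDegree_eq_dim
  set g : Fin n → (Fin n → ℚ) := fun k => (M ^ (k : ℕ)).mulVec w with hg
  have hli : LinearIndependent ℚ g := by
    rw [Fintype.linearIndependent_iff]
    intro c hc
    by_contra hcne
    push_neg at hcne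
    obtain ⟨i0, hi0⟩ := hcne
    set p : ℚ[X] := ∑ k : Fin n, C (c k) * X ^ (k : ℕ) with hp
    have haev : aeval M p = ∑ k : Fin n, c k • M ^ (k : ℕ) := by
      rw [hp, map_sum]
      refine Finset.sum_congr rfl fun k _ => ?_
      rw [map_mul, aeval_C, map_pow, aeval_X, Algebra.smul_def]
    have h1 : (aeval M p).mulVec w = 0 := by
      rw [haev, sum_mulVec']
      simpa [Matrix.smul_mulVec, hg] using hc
    have hpc : p.coeff (i0 : ℕ) = c i0 := by
      rw [hp, finset_sum_coeff]
      simp [coeff_C_mul, coeff_X_pow, Fin.val_eq_val]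
    have hp0 : p ≠ 0 := by
      intro h
      rw [h, coeff_zero] at hpc
      exact hi0 hpc.symm
    have hpdeg : p.natDegree < n := by
      have : p.natDegree ≤ n - 1 := by
        rw [hp]
        refine natDegree_sum_le_of_forall_le _ _ fun k _ => ?_
        refine le_trans (natDegree_mul_le) ?_
        simp only [natDegree_C, natDegree_X_pow, zero_add]
        omega
      omega
    have hnotdvd : ¬ M.charpoly ∣ p := by
      intro hdvd
      have := Polynomial.natDegree_le_of_dvd hdvd hp0
      omega
    obtain ⟨a, b, hab⟩ := hirr.coprime_iff_not_dvd.2 hnotdvd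
    have h2 : aeval M b * aeval M p = 1 := by
      have := congrArg (aeval M) hab
      simp only [map_add, map_mul, map_one, M.aeval_self_charpoly, mul_zero,
        zero_add] at this
      exact this
    have : w = 0 := by
      calc w = Matrix.mulVec 1 w := (Matrix.one_mulVec w).symm
        _ = (aeval M b * aeval M p).mulVec w := by rw [h2]
        _ = (aeval M b).mulVec ((aeval M p).mulVec w) :=
            (Matrix.mulVec_mulVec w _ _).symm
        _ = 0 := by rw [h1]; simp [Matrix.mulVec_zero]
    exact hw this
  have : Nonempty (Fin n) := ⟨⟨0, Nat.pos_of_ne_zero hn⟩⟩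
  have hcard : Fintype.card (Fin n) = Module.finrank ℚ (Fin n → ℚ) := by simp
  have hsp : Submodule.span ℚ (Set.range g) = ⊤ :=
    hli.span_eq_top_of_card_eq_finrank hcard
  funext i
  have hmem : (Pi.single i 1 : Fin n → ℚ) ∈ Submodule.span ℚ (Set.range g) := by
    rw [hsp]; trivial
  rw [Submodule.mem_span_range_iff_exists_fun] at hmem
  obtain ⟨c, hc⟩ := hmem
  have hvi : v i = ∑ j, ((Pi.single i 1 : Fin n → ℚ) j : ℂ) * v j := by
    simp [Pi.single_apply, apply_ite (fun q : ℚ => (q : ℂ)), ite_mul]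
  rw [hvi, ← hc]
  have : ∑ j, (((∑ k : Fin n, c k • g k) j : ℚ) : ℂ) * v j
      = ∑ k : Fin n, (c k : ℂ) * ∑ j, ((g k j : ℚ) : ℂ) * v j := by
    simp only [Finset.sum_apply, Pi.smul_apply, smul_eq_mul]
    push_cast
    simp only [Finset.sum_mul]
    rw [Finset.sum_comm]
    refine Finset.sum_congr rfl fun k _ => ?_
    rw [Finset.mul_sum]
    exact Finset.sum_congr rfl fun j _ => by ring
  rw [this]
  refine Finset.sum_eq_zero fun k _ => ?_
  rw [hg]
  simp only
  rw [pairing_pow M α v hev (k : ℕ) w, hwv]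
  ring

/-- If `M` is a rational `n×n` matrix with irreducible characteristic
polynomial, `α ∈ ℂ` is an eigenvalue of `M`, and `v ∈ ℚ(α)ⁿ` is a nonzero vector with
`ᵗM v = α v`, then the coordinates of `v` are linearly independent over `ℚ`; consequently,
for `w₁, w₂ ∈ ℚⁿ`, `⟨w₁, v⟩ = ⟨w₂, v⟩` iff `w₁ = w₂`. -/
theorem statement5 {n : ℕ} (M : Matrix (Fin n) (Fin n) ℚ)
    (hirr : Irreducible M.charpoly)
    (α : ℂ) (hα : ((M.map (algebraMap ℚ ℂ)).charpoly).IsRoot α)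
    (v : Fin n → ℂ) (hv0 : v ≠ 0)
    (hvmem : ∀ i, v i ∈ (IntermediateField.adjoin ℚ {α} : IntermediateField ℚ ℂ))
    (hev : (M.map (algebraMap ℚ ℂ)).transpose.mulVec v = α • v) :
    LinearIndependent ℚ v ∧
    ∀ w₁ w₂ : Fin n → ℚ,
      (∑ i : Fin n, (w₁ i : ℂ) * v i = ∑ i : Fin n, (w₂ i : ℂ) * v i) ↔ w₁ = w₂ := by
  have lin : LinearIndependent ℚ v := by
    rw [Fintype.linearIndependent_iff]
    intro c hc
    by_contra hne
    push_neg at hne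
    obtain ⟨i0, hi0⟩ := hne
    have hcne : c ≠ 0 := fun h => hi0 (by rw [h]; rfl)
    have hc' : ∑ i, (c i : ℂ) * v i = 0 := by
      simpa [Rat.smul_def] using hc
    exact hv0 (pairing_zero M hirr α v hev c hcne hc')
  refine ⟨lin, fun w₁ w₂ => ⟨fun h => ?_, fun h => by rw [h]⟩⟩
  have hsub : ∑ i, (w₁ - w₂) i • v i = 0 := by
    simp only [Pi.sub_apply, sub_smul, Rat.smul_def]
    rw [Finset.sum_sub_distrib, h, sub_self]
  have := Fintype.linearIndependent_iff.mp lin (w₁ - w₂) hsub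
  funext i
  have := this i
  simpa [sub_eq_zero] using this

end PisotPaper
end

section
/- Let n ≥ 1, let v ∈ ℝⁿ have all coordinates positive, and let W be a finite word over 𝒜 = {1,…,n}. Let P be a prefix of W (possibly empty, possibly W itself), let Q be a proper prefix of W (possibly empty), and let b ∈ 𝒜 be the letter of W immediately following Q, so that Q b is a prefix of W. Set w = f(P) − f(Q) ∈ ℤⁿ, where f is the abelianization. If ⟨w, v⟩ ≥ 0 and ⟨w − e_b, v⟩ < 0, where e_b is the b-th standard basis vector, then P = Q (and hence w = 0). -/
open scoped BigOperators

namespace PisotPaper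

/-- Let `v ∈ ℝⁿ` be positive, `W` a word over `{1,…,n}`, `P` a prefix of
`W`, `Q` a proper prefix of `W`, and `b` the letter of `W` following `Q`. Set
`w = f(P) − f(Q)`. If `⟨w, v⟩ ≥ 0` and `⟨w − e_b, v⟩ < 0`, then `P = Q` (hence `w = 0`). -/
theorem statement12 {n : ℕ} (hn : 1 ≤ n) (v : Fin n → ℝ) (hv : ∀ i, 0 < v i)
    (W P Q : List (Fin n))
    (hP : P <+: W) (hQ : Q <+: W) (hQlt : Q.length < W.length)
    (b : Fin n) (hb : b = W.get ⟨Q.length, hQlt⟩)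
    (h1 : 0 ≤ ∑ i : Fin n, ((P.count i : ℝ) - (Q.count i : ℝ)) * v i)
    (h2 : ∑ i : Fin n, (((P.count i : ℝ) - (Q.count i : ℝ)) -
        (if i = b then 1 else 0)) * v i < 0) :
    P = Q ∧ ∀ i : Fin n, (P.count i : ℤ) - (Q.count i : ℤ) = 0 := by
  have key : P = Q := by
    by_contra hne
    rcases List.prefix_or_prefix_of_prefix hP hQ with hPQ | hQP
    · -- P is a strict prefix of Q: get a contradiction with h1
      obtain ⟨t, ht⟩ := hPQ
      have htne : t ≠ [] := by
        intro h; apply hne; simpa [h] using ht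
      obtain ⟨c, t', rfl⟩ := List.exists_cons_of_ne_nil htne
      have hle : ∀ i : Fin n, ((P.count i : ℝ) - (Q.count i : ℝ)) * v i ≤ 0 := by
        intro i
        have : P.count i ≤ Q.count i := by
          rw [← ht, List.count_append]; omega
        have hnp : (P.count i : ℝ) - (Q.count i : ℝ) ≤ 0 := by
          have := (Nat.cast_le (α := ℝ)).mpr this; linarith
        exact mul_nonpos_of_nonpos_of_nonneg hnp (hv i).le
      have hc : ((P.count c : ℝ) - (Q.count c : ℝ)) * v c < 0 := by
        have : P.count c + 1 ≤ Q.count c := by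
          rw [← ht, List.count_append]; simp
        have hneg : (P.count c : ℝ) - (Q.count c : ℝ) < 0 := by
          have := (Nat.cast_le (α := ℝ)).mpr this; push_cast at this; linarith
        exact mul_neg_of_neg_of_pos hneg (hv c)
      have : ∑ i : Fin n, ((P.count i : ℝ) - (Q.count i : ℝ)) * v i < 0 := by
        calc ∑ i : Fin n, ((P.count i : ℝ) - (Q.count i : ℝ)) * v i
            < ∑ _i : Fin n, (0 : ℝ) := by
              apply Finset.sum_lt_sum (fun i _ => hle i) ⟨c, Finset.mem_univ c, hc⟩
          _ = 0 := by simp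
      linarith
    · -- Q is a strict prefix of P, so Q ++ [b] ≤ P: contradiction with h2
      have hQb : Q ++ [b] <+: W := by
        have hQtake : W.take Q.length = Q := List.prefix_iff_eq_take.mp hQ |>.symm
        have := List.take_concat_get hQlt
        rw [hQtake] at this
        rw [hb]
        simp only [List.get_eq_getElem]
        rw [← List.concat_eq_append, this]
        exact List.take_prefix _ _
      have hlen : (Q ++ [b]).length ≤ P.length := by
        have : Q.length < P.length := by
          rcases lt_or_eq_of_le hQP.length_le with h | h
          · exact h
          · exact absurd (List.IsPrefix.eq_of_length hQP h).symm hne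
        simpa using this
      have hQbP : Q ++ [b] <+: P := List.prefix_of_prefix_length_le hQb hP hlen
      have hge : ∀ i : Fin n,
          0 ≤ (((P.count i : ℝ) - (Q.count i : ℝ)) - (if i = b then 1 else 0)) * v i := by
        intro i
        have hcnt : (Q ++ [b]).count i ≤ P.count i := hQbP.sublist.count_le i
        rw [List.count_append] at hcnt
        have hsing : ([b].count i) = if i = b then 1 else 0 := by
          by_cases h : i = b <;> simp [h, List.count_singleton'] <;> exact Ne.symm h
        rw [hsing] at hcnt
        apply mul_nonneg _ (hv i).le
        by_cases h : i = b <;> simp [h] at hcnt ⊢ <;>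
          [ { have := (Nat.cast_le (α := ℝ)).mpr hcnt; push_cast at this; linarith };
            { have := (Nat.cast_le (α := ℝ)).mpr hcnt; linarith } ]
      have : (0 : ℝ) ≤ ∑ i : Fin n,
          (((P.count i : ℝ) - (Q.count i : ℝ)) - (if i = b then 1 else 0)) * v i :=
        Finset.sum_nonneg fun i _ => hge i
      linarith
  exact ⟨key, fun i => by rw [key]; ring⟩

end PisotPaper
end

section
/- Let σ be an irreducible unimodular Pisot substitution with the associated space K_σ = ℝ^{r−1} × ℂ^s, embedding map Φ′, left Perron eigenvector v, and Rauzy fractal subtiles R_σ(a) = Ψ(Σ_A(a)). For a ∈ 𝒜 and k ≥ 1, let P_k(a) = {Φ′(⟨f(σ^{k−1}(p_{k−1}) σ^{k−2}(p_{k−2}) ⋯ p_0), v⟩) : (b_{i+1} : p_i a_i s_i)_{i=0}^{k−1} an admissible path in E with a_0 = a and a_i = b_i for 1 ≤ i ≤ k−1} ⊂ K_σ, the finite set of points obtained from admissible paths of length k ending at a. Then P_k(a) converges to R_σ(a) in the Hausdorff metric as k → ∞; moreover there are constants C > 0 and 0 < β < 1 with d_H(P_k(a), R_σ(a)) ≤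 C β^k for all k. -/
open scoped BigOperators ComplexConjugate
open IntermediateField

namespace PisotPaper

/-- The prefix `p` of the state `(b : p a s)`. -/
def psWord {n : ℕ} (σ : Fin n → List (Fin n)) (e : PS σ) : List (Fin n) := (σ e.1).take e.2

/-- The subshift of finite type `Σ_A`. -/
def SubA {n : ℕ} (σ : Fin n → List (Fin n)) : Type :=
  {ω : ℕ → PS σ // ∀ k, psLetter σ (ω (k+1)) = (ω k).1}

/-- The pairing `⟨f(p), v⟩` of the abelianization of a word with a vector. -/
def pairK {n : ℕ} {F : Type*} [CommRing F] (v : Fin n → F) (p : List (Fin n)) : F :=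
  ∑ i : Fin n, (p.count i : F) * v i

/-- The representation space `K_σ = ℝ^{r-1} × ℂ^s`. -/
abbrev Ksig (r' s : ℕ) : Type := (Fin r' → ℝ) × (Fin s → ℂ)

/-- The embedding `Φ′(ξ) = (τ_2 ξ, …, τ_{r+s} ξ)` of `K = ℚ(α)` into `K_σ`. -/
noncomputable def PhiMap {r' s : ℕ} (α : ℝ) (τr : Fin r' → (ℚ⟮α⟯ →+* ℝ)) (τc : Fin s → (ℚ⟮α⟯ →+* ℂ))
    (ξ : ℚ⟮α⟯) : Ksig r' s :=
  (fun i => τr i ξ, fun j => τc j ξ)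

/-- The representation map `Ψ : Σ_A → K_σ`,
`Ψ(ω) = (Σ_k τ_i(⟨f(p_k), v⟩) τ_i(α)^k)_i`. -/
noncomputable def PsiMap {n r' s : ℕ} (α : ℝ) (σ : Fin n → List (Fin n))
    (τr : Fin r' → (ℚ⟮α⟯ →+* ℝ)) (τc : Fin s → (ℚ⟮α⟯ →+* ℂ))
    (v : Fin n → ℚ⟮α⟯) (ω : SubA σ) : Ksig r' s :=
  (fun i => ∑' k : ℕ, τr i (pairK v (psWord σ (ω.1 k))) *
      (τr i (IntermediateField.AdjoinSimple.gen ℚ α)) ^ k,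
   fun j => ∑' k : ℕ, τc j (pairK v (psWord σ (ω.1 k))) *
      (τc j (IntermediateField.AdjoinSimple.gen ℚ α)) ^ k)

/-- The Rauzy fractal subtile `R_σ(a) = Ψ(Σ_A(a))`. -/
def Rtile {n r' s : ℕ} (α : ℝ) (σ : Fin n → List (Fin n))
    (τr : Fin r' → (ℚ⟮α⟯ →+* ℝ)) (τc : Fin s → (ℚ⟮α⟯ →+* ℂ))
    (v : Fin n → ℚ⟮α⟯) (a : Fin n) : Set (Ksig r' s) :=
  PsiMap α σ τr τc v '' {ω : SubA σ | psLetter σ (ω.1 0) = a}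

/-- Membership `(w, b) ∈ Γ`: `⟨w, v⟩ ≥ 0` and `⟨w − e_b, v⟩ < 0` (evaluated via the real
embedding fixing `α`). -/
def inGamma {n : ℕ} (α : ℝ) (v : Fin n → ℚ⟮α⟯) (w : Fin n → ℤ) (b : Fin n) : Prop :=
  0 ≤ ((∑ i : Fin n, (w i : ℚ⟮α⟯) * v i : ℚ⟮α⟯) : ℝ) ∧
  ((∑ i : Fin n, ((w i - (if i = b then 1 else 0) : ℤ) : ℚ⟮α⟯) * v i : ℚ⟮α⟯) : ℝ) < 0

/-- The hypothesis that `τr`, `τc` together with the real embedding fixing `α` enumerate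
all embeddings of `ℚ(α)` into `ℂ`, without repetition, one complex embedding from each
conjugate pair being listed in `τc`. -/
def EnumeratesEmbeddings {r' s : ℕ} (α : ℝ) (τr : Fin r' → (ℚ⟮α⟯ →+* ℝ))
    (τc : Fin s → (ℚ⟮α⟯ →+* ℂ)) : Prop :=
  Function.Bijective (fun x : (Option (Fin r')) ⊕ (Fin s ⊕ Fin s) =>
    Sum.elim
      (fun o : Option (Fin r') => o.elim
        (Complex.ofRealHom.comp (algebraMap ℚ⟮α⟯ ℝ))
        (fun i => Complex.ofRealHom.comp (τr i)))
      (Sum.elim (fun j => τc j)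
        (fun j => (starRingEnd ℂ).comp (τc j))) x)


/-- The extension of a substitution to words, by concatenation. -/
def substWord {n : ℕ} (σ : Fin n → List (Fin n)) (w : List (Fin n)) : List (Fin n) :=
  (w.map σ).flatten

/-- The word `p = σ^{m−1}(p_{m−1}) σ^{m−2}(p_{m−2}) ⋯ σ(p_1) p_0` associated with an
admissible path. -/
def pathWord {n : ℕ} (σ : Fin n → List (Fin n)) {m : ℕ} (c : Fin m → PS σ) :
    List (Fin n) :=
  (List.ofFn (fun i : Fin m => (substWord σ)^[(i.rev : ℕ)] (psWord σ (c i.rev)))).flatten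

/-- The finite point set `P_{k+1}(a)` of `Φ′`-images of the polynomial values coming from
admissible paths of length `k+1` ending at `a`. -/
noncomputable def pathPoints {n r' s : ℕ} (α : ℝ) (σ : Fin n → List (Fin n))
    (τr : Fin r' → (ℚ⟮α⟯ →+* ℝ)) (τc : Fin s → (ℚ⟮α⟯ →+* ℂ))
    (v : Fin n → ℚ⟮α⟯) (k : ℕ) (a : Fin n) : Set (Ksig r' s) :=
  {X : Ksig r' s | ∃ c : Fin (k + 1) → PS σ,
    (∀ (i : ℕ) (h : i + 1 < k + 1),
      psLetter σ (c ⟨i + 1, h⟩) = (c ⟨i, Nat.lt_of_succ_lt h⟩).1) ∧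
    psLetter σ (c 0) = a ∧
    X = PhiMap α τr τc (pairK v (pathWord σ c))}


/-! ### Auxiliary lemmas -/

section Aux

variable {n : ℕ} {F : Type*} [CommRing F] (σ : Fin n → List (Fin n)) (v : Fin n → F)

lemma pairK_nil : pairK v ([] : List (Fin n)) = 0 := by simp [pairK]

lemma pairK_append (x y : List (Fin n)) : pairK v (x ++ y) = pairK v x + pairK v y := by
  simp [pairK, List.count_append, add_mul, Finset.sum_add_distrib]

lemma pairK_cons (a : Fin n) (w : List (Fin n)) : pairK v (a :: w) = v a + pairK v w := by
  have : pairK v [a] = v a := by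
    unfold pairK
    rw [Finset.sum_eq_single a] <;> simp +contextual [List.count_singleton, eq_comm (a := a)]
  simpa [this] using pairK_append v [a] w

lemma pairK_flatten (L : List (List (Fin n))) :
    pairK v L.flatten = (L.map (pairK v)).sum := by
  induction L with
  | nil => simp [pairK_nil]
  | cons l L ih => simp [List.flatten_cons, pairK_append, ih]

variable {g : F} (hev : ∀ a, pairK v (σ a) = g * v a)

include hev in
lemma pairK_substWord (w : List (Fin n)) :
    pairK v (substWord σ w) = g * pairK v w := by
  induction w with
  | nil => simp [substWord, pairK_nil]
  | cons a w ih =>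
      have : substWord σ (a :: w) = σ a ++ substWord σ w := by simp [substWord]
      rw [this, pairK_append, ih, pairK_cons, hev, mul_add]

include hev in
lemma pairK_iterate (m : ℕ) (w : List (Fin n)) :
    pairK v ((substWord σ)^[m] w) = g ^ m * pairK v w := by
  induction m with
  | zero => simp
  | succ m ih =>
      rw [Function.iterate_succ_apply', pairK_substWord σ v hev, ih, pow_succ]; ring

include hev in
lemma pairK_pathWord (m : ℕ) (c : Fin m → PS σ) :
    pairK v (pathWord σ c) = ∑ j : Fin m, g ^ (j : ℕ) * pairK v (psWord σ (c j)) := by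
  rw [pathWord, pairK_flatten, List.map_ofFn, List.sum_ofFn]
  refine Fintype.sum_equiv (Fin.revPerm) _ _ (fun i => ?_)
  simp [Function.comp, pairK_iterate σ v hev]

lemma tail_bound' {F : Type*} [NormedField F] [CompleteSpace F] (f : ℕ → F)
    (B β : ℝ) (hbound : ∀ j, ‖f j‖ ≤ B * β ^ j) (hB0 : 0 ≤ B)
    (hβ0 : 0 ≤ β) (hβ1 : β < 1) (m : ℕ) :
    dist (∑ j ∈ Finset.range m, f j) (∑' j : ℕ, f j) ≤ B * β ^ m / (1 - β) := by
  have hgeom : Summable (fun j : ℕ => B * β ^ j) :=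
    (summable_geometric_of_lt_one hβ0 hβ1).mul_left B
  have hnorm : Summable (fun j => ‖f j‖) :=
    Summable.of_nonneg_of_le (fun j => norm_nonneg _) hbound hgeom
  have hsum : Summable f := hnorm.of_norm
  have hkey := Summable.sum_add_tsum_nat_add (f := f) m hsum
  have heq : (∑' j : ℕ, f j) - (∑ j ∈ Finset.range m, f j) = ∑' j : ℕ, f (j + m) := by
    rw [← hkey]; ring
  rw [dist_eq_norm, ← norm_neg, neg_sub, heq]
  have hn2 : Summable (fun j => ‖f (j + m)‖) := (summable_nat_add_iff m).2 hnorm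
  have h1 : ‖∑' j : ℕ, f (j + m)‖ ≤ ∑' j : ℕ, ‖f (j + m)‖ := norm_tsum_le_tsum_norm hn2
  have hg2 : Summable (fun j : ℕ => B * β ^ m * β ^ j) :=
    (summable_geometric_of_lt_one hβ0 hβ1).mul_left (B * β ^ m)
  have h2 : ∀ j : ℕ, ‖f (j + m)‖ ≤ B * β ^ m * β ^ j := by
    intro j
    have := hbound (j + m)
    rw [pow_add] at this
    calc ‖f (j + m)‖ ≤ B * (β ^ j * β ^ m) := this
    _ = B * β ^ m * β ^ j := by ring
  have h3 : (∑' j : ℕ, ‖f (j + m)‖) ≤ ∑' j : ℕ, B * β ^ m * β ^ j :=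
    Summable.tsum_le_tsum h2 hn2 hg2
  have h4 : (∑' j : ℕ, B * β ^ m * β ^ j) = B * β ^ m * (1 - β)⁻¹ := by
    rw [tsum_mul_left, tsum_geometric_of_lt_one hβ0 hβ1]
  rw [div_eq_mul_inv]
  exact le_trans h1 (le_trans h3 (le_of_eq h4))

lemma tail_bound {F : Type*} [NormedField F] [CompleteSpace F] (u : ℕ → F) (x : F)
    (B β : ℝ) (hB : ∀ j, ‖u j‖ ≤ B) (hx : ‖x‖ ≤ β) (hβ0 : 0 ≤ β) (hβ1 : β < 1) (m : ℕ) :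
    dist (∑ j ∈ Finset.range m, u j * x ^ j) (∑' j : ℕ, u j * x ^ j)
      ≤ B * β ^ m / (1 - β) := by
  have hB0 : 0 ≤ B := le_trans (norm_nonneg (u 0)) (hB 0)
  refine tail_bound' _ B β (fun j => ?_) hB0 hβ0 hβ1 m
  calc ‖u j * x ^ j‖ = ‖u j‖ * ‖x‖ ^ j := by simp [norm_mul, norm_pow]
  _ ≤ B * β ^ j :=
      mul_le_mul (hB j) (pow_le_pow_left₀ (norm_nonneg x) hx j)
        (pow_nonneg (norm_nonneg x) j) hB0

end Aux

/-- The point sets `P_k(a)` obtained from admissible paths of length `k`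
ending at `a` converge to the subtile `R_σ(a)` in the Hausdorff metric, with a geometric
rate: `d_H(P_k(a), R_σ(a)) ≤ C β^k` for some `C > 0` and `0 < β < 1` and all `k ≥ 1`. -/
theorem statement18 {n r' s : ℕ} (hn : 2 ≤ n) (σ : Fin n → List (Fin n)) (α : ℝ)
    (hσα : IsIrredPisot σ α)
    (hunimod : IsUnit (incMat σ).det)
    (τr : Fin r' → (ℚ⟮α⟯ →+* ℝ)) (τc : Fin s → (ℚ⟮α⟯ →+* ℂ))
    (hemb : EnumeratesEmbeddings α τr τc)
    (v : Fin n → ℚ⟮α⟯)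
    (hvpos : ∀ i, (0 : ℝ) < (v i : ℝ))
    (hvint : ∀ i, IsIntegral ℤ (v i))
    (hev : ∀ j : Fin n, ∑ i : Fin n, ((incMat σ i j : ℤ) : ℚ⟮α⟯) * v i =
      IntermediateField.AdjoinSimple.gen ℚ α * v j)
    (a : Fin n) :
    (∃ C : ℝ, 0 < C ∧ ∃ β : ℝ, 0 < β ∧ β < 1 ∧
      ∀ k : ℕ, Metric.hausdorffDist (pathPoints α σ τr τc v k a)
        (Rtile α σ τr τc v a) ≤ C * β ^ (k + 1)) ∧
    Filter.Tendsto
      (fun k : ℕ => Metric.hausdorffDist (pathPoints α σ τr τc v k a)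
        (Rtile α σ τr τc v a))
      Filter.atTop (nhds 0) := by
  classical
  obtain ⟨hne, hirr, hroot, hpisot⟩ := hσα
  have hint : IsIntegral ℚ α := IsIntegral.tower_top hpisot.2.1
  set gen : ℚ⟮α⟯ := IntermediateField.AdjoinSimple.gen ℚ α with hgendef
  -- ring homomorphisms on `ℚ⟮α⟯` are determined by their value at `gen`
  have hext : ∀ f g : ℚ⟮α⟯ →+* ℂ, f gen = g gen → f = g := by
    intro f g h
    have h2 : f.toRatAlgHom = g.toRatAlgHom := by
      apply (IntermediateField.adjoin.powerBasis hint).algHom_ext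
      rw [IntermediateField.adjoin.powerBasis_gen]
      exact h
    calc f = ↑f.toRatAlgHom := (f.toRatAlgHom_toRingHom).symm
    _ = ↑g.toRatAlgHom := by rw [h2]
    _ = g := g.toRatAlgHom_toRingHom
  have hrootE : ∀ E : ℚ⟮α⟯ →+* ℂ, Polynomial.aeval (E gen) (minpoly ℚ α) = 0 := by
    intro E
    have h0 : Polynomial.aeval gen (minpoly ℚ α) = 0 :=
      IntermediateField.aeval_gen_minpoly ℚ α
    have h1 := Polynomial.aeval_algHom_apply E.toRatAlgHom gen (minpoly ℚ α)
    rw [h0, map_zero] at h1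
    exact h1
  set Eα : ℚ⟮α⟯ →+* ℂ := Complex.ofRealHom.comp (algebraMap ℚ⟮α⟯ ℝ) with hEαdef
  have hEαgen : Eα gen = (α : ℂ) := by
    simp [hEαdef, hgendef, RingHom.comp_apply]
  have hembinj := hemb.1
  have hτr1 : ∀ i, ‖τr i gen‖ < 1 := by
    intro i
    have hner : Complex.ofRealHom.comp (τr i) ≠ Eα := by
      intro h
      have h2 : (Sum.inl (some i) : (Option (Fin r')) ⊕ (Fin s ⊕ Fin s)) = Sum.inl none :=
        hembinj h
      simp at h2
    have hne2 : ((τr i gen : ℝ) : ℂ) ≠ (α : ℂ) := by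
      intro h
      exact hner (hext _ _ (by rw [hEαgen]; exact h))
    have habs : ‖((τr i gen : ℝ) : ℂ)‖ < 1 :=
      hpisot.2.2 _ (hrootE (Complex.ofRealHom.comp (τr i))) hne2
    rw [Complex.norm_real] at habs
    exact habs
  have hτc1 : ∀ j, ‖τc j gen‖ < 1 := by
    intro j
    have hner : τc j ≠ Eα := by
      intro h
      have h2 : (Sum.inr (Sum.inl j) : (Option (Fin r')) ⊕ (Fin s ⊕ Fin s)) = Sum.inl none :=
        hembinj h
      simp at h2
    have hne2 : τc j gen ≠ (α : ℂ) := fun h => hner (hext _ _ (by rw [hEαgen, h]))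
    have habs : ‖τc j gen‖ < 1 := hpisot.2.2 _ (hrootE (τc j)) hne2
    exact habs
  -- the contraction ratio β
  set βnn : NNReal := Finset.univ.sup
      (fun x : Fin r' ⊕ Fin s => Sum.elim (fun i => ‖τr i gen‖₊) (fun j => ‖τc j gen‖₊) x)
    with hβnndef
  set β : ℝ := max 2⁻¹ (βnn : ℝ) with hβdef
  have hβpos : 0 < β := lt_of_lt_of_le (by norm_num) (le_max_left _ _)
  have hβlt1 : β < 1 := by
    rw [hβdef]
    apply max_lt (by norm_num)
    have hlt : βnn < 1 := by
      rw [hβnndef]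
      refine (Finset.sup_lt_iff (by norm_num)).2 ?_
      intro x _
      cases x with
      | inl i =>
          show ‖τr i gen‖₊ < 1
          rw [← NNReal.coe_lt_coe]
          simpa using hτr1 i
      | inr j =>
          show ‖τc j gen‖₊ < 1
          rw [← NNReal.coe_lt_coe]
          simpa using hτc1 j
    exact_mod_cast hlt
  have hβr : ∀ i, ‖τr i gen‖ ≤ β := by
    intro i
    refine le_trans ?_ (le_max_right _ _)
    rw [← coe_nnnorm]
    exact_mod_cast Finset.le_sup (f := fun x : Fin r' ⊕ Fin s =>
      Sum.elim (fun i => ‖τr i gen‖₊) (fun j => ‖τc j gen‖₊) x) (Finset.mem_univ (Sum.inl i))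
  have hβc : ∀ j, ‖τc j gen‖ ≤ β := by
    intro j
    refine le_trans ?_ (le_max_right _ _)
    rw [← coe_nnnorm]
    exact_mod_cast Finset.le_sup (f := fun x : Fin r' ⊕ Fin s =>
      Sum.elim (fun i => ‖τr i gen‖₊) (fun j => ‖τc j gen‖₊) x)
      (Finset.mem_univ (Sum.inr j))
  -- the constant B
  set B : ℝ := (∑ i : Fin r', ∑ e : PS σ, ‖τr i (pairK v (psWord σ e))‖)
      + ∑ j : Fin s, ∑ e : PS σ, ‖τc j (pairK v (psWord σ e))‖ with hBdef
  have hs1 : (0:ℝ) ≤ ∑ i : Fin r', ∑ e : PS σ, ‖τr i (pairK v (psWord σ e))‖ :=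
    Finset.sum_nonneg fun _ _ => Finset.sum_nonneg fun _ _ => norm_nonneg _
  have hs2 : (0:ℝ) ≤ ∑ j : Fin s, ∑ e : PS σ, ‖τc j (pairK v (psWord σ e))‖ :=
    Finset.sum_nonneg fun _ _ => Finset.sum_nonneg fun _ _ => norm_nonneg _
  have hB0 : 0 ≤ B := add_nonneg hs1 hs2
  have hBr : ∀ (i : Fin r') (e : PS σ), ‖τr i (pairK v (psWord σ e))‖ ≤ B := by
    intro i e
    have h1 : ‖τr i (pairK v (psWord σ e))‖ ≤ ∑ e : PS σ, ‖τr i (pairK v (psWord σ e))‖ :=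
      Finset.single_le_sum (f := fun e => ‖τr i (pairK v (psWord σ e))‖)
        (fun _ _ => norm_nonneg _) (Finset.mem_univ e)
    have h2 : (∑ e : PS σ, ‖τr i (pairK v (psWord σ e))‖)
        ≤ ∑ i : Fin r', ∑ e : PS σ, ‖τr i (pairK v (psWord σ e))‖ :=
      Finset.single_le_sum
        (f := fun i => ∑ e : PS σ, ‖τr i (pairK v (psWord σ e))‖)
        (fun _ _ => Finset.sum_nonneg fun _ _ => norm_nonneg _) (Finset.mem_univ i)
    exact le_trans h1 (le_trans h2 (le_add_of_nonneg_right hs2))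
  have hBc : ∀ (j : Fin s) (e : PS σ), ‖τc j (pairK v (psWord σ e))‖ ≤ B := by
    intro j e
    have h1 : ‖τc j (pairK v (psWord σ e))‖ ≤ ∑ e : PS σ, ‖τc j (pairK v (psWord σ e))‖ :=
      Finset.single_le_sum (f := fun e => ‖τc j (pairK v (psWord σ e))‖)
        (fun _ _ => norm_nonneg _) (Finset.mem_univ e)
    have h2 : (∑ e : PS σ, ‖τc j (pairK v (psWord σ e))‖)
        ≤ ∑ j : Fin s, ∑ e : PS σ, ‖τc j (pairK v (psWord σ e))‖ :=
      Finset.single_le_sum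
        (f := fun j => ∑ e : PS σ, ‖τc j (pairK v (psWord σ e))‖)
        (fun _ _ => Finset.sum_nonneg fun _ _ => norm_nonneg _) (Finset.mem_univ j)
    exact le_trans h1 (le_trans h2 (le_add_of_nonneg_left hs1))
  -- the eigenvalue relation
  have hev' : ∀ b, pairK v (σ b) = gen * v b := by
    intro b
    rw [← hev b]
    unfold pairK incMat
    push_cast
    rfl
  -- the partial-sum identities
  have hidr : ∀ (i : Fin r') (m : ℕ) (w : ℕ → PS σ),
      τr i (pairK v (pathWord σ (fun t : Fin m => w t))) =
      ∑ j ∈ Finset.range m, τr i (pairK v (psWord σ (w j))) * (τr i gen) ^ j := by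
    intro i m w
    rw [pairK_pathWord σ v hev' m, map_sum,
      Fin.sum_univ_eq_sum_range (fun j => τr i (gen ^ j * pairK v (psWord σ (w j)))) m]
    exact Finset.sum_congr rfl fun j _ => by rw [map_mul, map_pow, mul_comm]
  have hidc : ∀ (j : Fin s) (m : ℕ) (w : ℕ → PS σ),
      τc j (pairK v (pathWord σ (fun t : Fin m => w t))) =
      ∑ l ∈ Finset.range m, τc j (pairK v (psWord σ (w l))) * (τc j gen) ^ l := by
    intro j m w
    rw [pairK_pathWord σ v hev' m, map_sum,
      Fin.sum_univ_eq_sum_range (fun l => τc j (gen ^ l * pairK v (psWord σ (w l)))) m]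
    exact Finset.sum_congr rfl fun l _ => by rw [map_mul, map_pow, mul_comm]
  -- every letter has a state
  have hstate : ∀ b : Fin n, ∃ e : PS σ, psLetter σ e = b := by
    intro b
    by_contra h
    push_neg at h
    have hrow : ∀ c, (σ c).count b = 0 := by
      intro c
      rw [List.count_eq_zero]
      intro hb
      obtain ⟨i, hi⟩ := List.mem_iff_get.1 hb
      exact h ⟨c, i⟩ hi
    have hdet : (incMat σ).det = 0 :=
      Matrix.det_eq_zero_of_row_eq_zero b (fun j => by simp [incMat, hrow j])
    exact hunimod.ne_zero hdet
  choose succ hsucc using hstate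
  -- the constant C
  have h1β : 0 < 1 - β := by linarith
  set C : ℝ := (B + 1) / (1 - β) with hCdef
  have hC0 : 0 < C := div_pos (by linarith) h1β
  -- the core estimate
  have hcore : ∀ (m : ℕ) (ω : SubA σ),
      dist (PhiMap α τr τc (pairK v (pathWord σ (fun t : Fin m => ω.1 t))))
        (PsiMap α σ τr τc v ω) ≤ C * β ^ m := by
    intro m ω
    have hCb0 : 0 ≤ C * β ^ m := le_of_lt (mul_pos hC0 (pow_pos hβpos m))
    have hkey : B * β ^ m / (1 - β) ≤ C * β ^ m := by
      rw [hCdef, div_mul_eq_mul_div]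
      exact (div_le_div_iff_of_pos_right h1β).2 (by nlinarith [pow_nonneg hβpos.le m])
    rw [PhiMap, PsiMap, Prod.dist_eq]
    apply max_le
    · rw [dist_pi_le_iff hCb0]
      intro i
      have hstep : dist (τr i (pairK v (pathWord σ (fun t : Fin m => ω.1 t))))
          (∑' k : ℕ, τr i (pairK v (psWord σ (ω.1 k))) * (τr i gen) ^ k)
          ≤ B * β ^ m / (1 - β) := by
        rw [hidr i m ω.1]
        exact tail_bound _ _ B β (fun j => hBr i _) (hβr i) hβpos.le hβlt1 m
      exact le_trans hstep hkey
    · rw [dist_pi_le_iff hCb0]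
      intro j
      have hstep : dist (τc j (pairK v (pathWord σ (fun t : Fin m => ω.1 t))))
          (∑' k : ℕ, τc j (pairK v (psWord σ (ω.1 k))) * (τc j gen) ^ k)
          ≤ B * β ^ m / (1 - β) := by
        rw [hidc j m ω.1]
        exact tail_bound _ _ B β (fun l => hBc j _) (hβc j) hβpos.le hβlt1 m
      exact le_trans hstep hkey
  -- the Hausdorff distance bound
  have hbnd : ∀ k : ℕ, Metric.hausdorffDist (pathPoints α σ τr τc v k a)
      (Rtile α σ τr τc v a) ≤ C * β ^ (k + 1) := by
    intro k
    have hCb0 : 0 ≤ C * β ^ (k + 1) := le_of_lt (mul_pos hC0 (pow_pos hβpos (k + 1)))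
    apply Metric.hausdorffDist_le_of_mem_dist hCb0
    · rintro x ⟨c, hadm, hlet, rfl⟩
      obtain ⟨Fw, hFlt, hprop⟩ : ∃ Fw : ℕ → PS σ,
          (∀ (i : ℕ) (h : i < k + 1), Fw i = c ⟨i, h⟩) ∧
          (∀ i, psLetter σ (Fw (i + 1)) = (Fw i).1) := by
        refine ⟨fun i => if h : i < k + 1 then c ⟨i, h⟩
          else (fun e : PS σ => succ e.1)^[i - k] (c (Fin.last k)), fun i h => dif_pos h, ?_⟩
        have hFge : ∀ i, k ≤ i →
            (if h : i < k + 1 then c ⟨i, h⟩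
              else (fun e : PS σ => succ e.1)^[i - k] (c (Fin.last k)))
            = (fun e : PS σ => succ e.1)^[i - k] (c (Fin.last k)) := by
          intro i hi
          rcases eq_or_lt_of_le hi with h | h
          · subst h
            rw [dif_pos (Nat.lt_succ_self k), Nat.sub_self, Function.iterate_zero, id_eq]
            rfl
          · have hnot : ¬ (i < k + 1) := by omega
            rw [dif_neg hnot]
        intro i
        dsimp only
        by_cases h : i + 1 < k + 1
        · rw [dif_pos h, dif_pos (Nat.lt_of_succ_lt h)]
          exact hadm i h
        · have hik : k ≤ i := by omega
          rw [hFge i hik, hFge (i + 1) (by omega)]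
          have h2 : i + 1 - k = (i - k) + 1 := by omega
          rw [h2, Function.iterate_succ_apply']
          exact hsucc _
      refine ⟨PsiMap α σ τr τc v ⟨Fw, hprop⟩, ⟨⟨Fw, hprop⟩, ?_, rfl⟩, ?_⟩
      · show psLetter σ (Fw 0) = a
        rw [hFlt 0 (Nat.succ_pos k)]
        exact hlet
      · have htr : (fun t : Fin (k + 1) => Fw t) = c := by
          funext t
          rw [hFlt t t.2]
        have h := hcore (k + 1) ⟨Fw, hprop⟩
        rw [htr] at h
        exact h
    · rintro y ⟨ω, hω, rfl⟩
      refine ⟨PhiMap α τr τc (pairK v (pathWord σ (fun t : Fin (k + 1) => ω.1 t))),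
        ⟨fun t : Fin (k + 1) => ω.1 t, fun i h => ω.2 i, hω, rfl⟩, ?_⟩
      rw [dist_comm]
      exact hcore (k + 1) ω
  refine ⟨⟨C, hC0, β, hβpos, hβlt1, hbnd⟩, ?_⟩
  have htend : Filter.Tendsto (fun k : ℕ => C * β ^ (k + 1)) Filter.atTop (nhds 0) := by
    have h := tendsto_pow_atTop_nhds_zero_of_lt_one hβpos.le hβlt1
    have h2 := h.const_mul (C * β)
    rw [mul_zero] at h2
    have heq : (fun k : ℕ => C * β ^ (k + 1)) = fun k : ℕ => (C * β) * β ^ k := by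
      funext k; rw [pow_succ]; ring
    rw [heq]
    exact h2
  exact squeeze_zero (fun k => Metric.hausdorffDist_nonneg) hbnd htend


end PisotPaper
end
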